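/- arXiv:2008.11429 — 6 statements merged into one kernel-verified Lean document; each statement's English description precedes it below -/
import Mathlib

section
/- Let α < 0 and let h : [r₀, r₁] → ℝ be a C¹ function with r₀^α · |h(r₀)|² ≤ D₀. Then −(2/α)·r₁^α·|h(r₁)|² + ∫_{r₀}^{r₁} r^{α−1} |h(r)|² dr ≤ (4/α²) ∫_{r₀}^{r₁} r^{α+1} |h'(r)|² dr − (2/α)·D₀. -/
/-!
For any real `α`, `r^(α-1) (α h / 2 + r h')² ≥ 0` expands to
`(α²/4) r^(α-1) h² ≤ r^(α+1) h'² + (α/2) (r^α h²)'`; integrating over `[r₀, r₁]` bounds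
the Hardy integral by the energy integral plus a boundary term. For `α < 0` the left boundary
term enters with a positive factor `-2/α`, so it may be replaced by the bound `D₀`.
-/

open intervalIntegral
open MeasureTheory (volume)

lemma hasDerivAt_rpow_mul_sq {α x y : ℝ} {h : ℝ → ℝ} (hx : 0 < x) (hh : HasDerivAt h y x) :
    HasDerivAt (fun r => r ^ α * h r ^ 2)
      (α * x ^ (α - 1) * h x ^ 2 + 2 * x ^ α * h x * y) x :=
  ((Real.hasDerivAt_rpow_const (Or.inl hx.ne')).fun_mul (hh.fun_pow 2)).congr_deriv (by
    push_cast; ring)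

lemma rpow_sub_one_mul_sq_le (α x a b : ℝ) (hx : 0 < x) :
    α ^ 2 / 4 * (x ^ (α - 1) * a ^ 2)
      ≤ x ^ (α + 1) * b ^ 2 + α / 2 * (α * x ^ (α - 1) * a ^ 2 + 2 * x ^ α * a * b) := by
  have hpow : x ^ α = x ^ (α - 1) * x := by
    rw [← Real.rpow_add_one hx.ne', sub_add_cancel]
  have hpow_add_one : x ^ (α + 1) = x ^ (α - 1) * x ^ 2 := by
    rw [← Real.rpow_natCast, ← Real.rpow_add hx]; ring_nf
  rw [hpow, hpow_add_one]
  linear_combination mul_nonneg (Real.rpow_nonneg hx.le (α - 1)) (sq_nonneg (α / 2 * a + x * b))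

theorem hardy_inequality_rpow_weight (α : ℝ) {r₀ r₁ : ℝ} {h h' : ℝ → ℝ}
    (hr₀ : 0 < r₀) (hr : r₀ ≤ r₁)
    (hderiv : ∀ r ∈ Set.Icc r₀ r₁, HasDerivAt h (h' r) r)
    (hcont : ContinuousOn h' (Set.Icc r₀ r₁)) :
    α ^ 2 / 4 * ∫ r in r₀..r₁, r ^ (α - 1) * h r ^ 2
      ≤ (∫ r in r₀..r₁, r ^ (α + 1) * h' r ^ 2)
        + α / 2 * (r₁ ^ α * h r₁ ^ 2 - r₀ ^ α * h r₀ ^ 2) := by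
  have hpos : ∀ r ∈ Set.Icc r₀ r₁, 0 < r := fun r hmem => hr₀.trans_le hmem.1
  have hh : ContinuousOn h (Set.Icc r₀ r₁) :=
    fun r hmem => (hderiv r hmem).continuousAt.continuousWithinAt
  have hrpow (β : ℝ) : ContinuousOn (fun r : ℝ => r ^ β) (Set.Icc r₀ r₁) :=
    continuousOn_id.rpow_const fun r hmem => Or.inl (hpos r hmem).ne'
  have int_hardy : IntervalIntegrable (fun r => r ^ (α - 1) * h r ^ 2) volume r₀ r₁ :=
    ((hrpow _).mul (hh.pow 2)).intervalIntegrable_of_Icc hr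
  have int_energy : IntervalIntegrable (fun r => r ^ (α + 1) * h' r ^ 2) volume r₀ r₁ :=
    ((hrpow _).mul (hcont.pow 2)).intervalIntegrable_of_Icc hr
  have int_deriv : IntervalIntegrable
      (fun r => α * r ^ (α - 1) * h r ^ 2 + 2 * r ^ α * h r * h' r) volume r₀ r₁ :=
    ((((hrpow _).const_smul α).mul (hh.pow 2)).add
      ((((hrpow _).const_smul (2 : ℝ)).mul hh).mul hcont)).intervalIntegrable_of_Icc hr
  have ftc : ∫ r in r₀..r₁, (α * r ^ (α - 1) * h r ^ 2 + 2 * r ^ α * h r * h' r)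
      = r₁ ^ α * h r₁ ^ 2 - r₀ ^ α * h r₀ ^ 2 := by
    refine integral_eq_sub_of_hasDerivAt (f := fun r => r ^ α * h r ^ 2) (fun x hx => ?_) int_deriv
    rw [Set.uIcc_of_le hr] at hx
    exact hasDerivAt_rpow_mul_sq (hpos x hx) (hderiv x hx)
  rw [← ftc, ← integral_const_mul, ← integral_const_mul, ← integral_add int_energy
    (int_deriv.const_mul _)]
  exact integral_mono_on hr (int_hardy.const_mul _)
    (int_energy.add (int_deriv.const_mul _))
    fun r hmem => rpow_sub_one_mul_sq_le α r (h r) (h' r) (hpos r hmem)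

theorem hardy_inequality_right_boundary_general
    (α r₀ r₁ D₀ : ℝ) (h h' : ℝ → ℝ)
    (hα : α < 0) (hr₀ : 0 < r₀) (hr : r₀ ≤ r₁)
    (hderiv : ∀ r ∈ Set.Icc r₀ r₁, HasDerivAt h (h' r) r)
    (hcont : ContinuousOn h' (Set.Icc r₀ r₁))
    (hbdry : r₀ ^ α * |h r₀| ^ 2 ≤ D₀) :
    -(2 / α) * r₁ ^ α * |h r₁| ^ 2 + ∫ r in r₀..r₁, r ^ (α - 1) * |h r| ^ 2
      ≤ (4 / α ^ 2) * (∫ r in r₀..r₁, r ^ (α + 1) * |h' r| ^ 2) - (2 / α) * D₀ := by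
  simp only [sq_abs] at hbdry ⊢
  set I := ∫ r in r₀..r₁, r ^ (α - 1) * h r ^ 2
  set J := ∫ r in r₀..r₁, r ^ (α + 1) * h' r ^ 2
  have hardy := mul_le_mul_of_nonneg_left (hardy_inequality_rpow_weight α hr₀ hr hderiv hcont)
    (by positivity : 0 ≤ 4 / α ^ 2)
  have hα₀ : α ≠ 0 := hα.ne
  have hI : 4 / α ^ 2 * (α ^ 2 / 4 * I) = I := by field_simp
  have hJ : 4 / α ^ 2 * (J + α / 2 * (r₁ ^ α * h r₁ ^ 2 - r₀ ^ α * h r₀ ^ 2))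
      = 4 / α ^ 2 * J + 2 / α * (r₁ ^ α * h r₁ ^ 2 - r₀ ^ α * h r₀ ^ 2) := by
    field_simp; ring
  have hbdry' := mul_le_mul_of_nonneg_left hbdry
    (neg_nonneg.2 (div_neg_of_pos_of_neg two_pos hα).le)
  linarith

/-- One-dimensional Hardy inequality with boundary term at the right endpoint
(Lemma `HardyIneqLHS`): for `α < 0` and `h` a `C¹` function on `[r₀, r₁]` with
`r₀^α |h(r₀)|² ≤ D₀`, one has
`−(2/α) r₁^α |h(r₁)|² + ∫_{r₀}^{r₁} r^{α−1} |h(r)|² dr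
  ≤ (4/α²) ∫_{r₀}^{r₁} r^{α+1} |h'(r)|² dr − (2/α) D₀`. -/
theorem hardy_inequality_right_boundary
    (α r₀ r₁ D₀ : ℝ) (h h' : ℝ → ℝ)
    (hα : α < 0) (hr₀ : 0 < r₀) (hr : r₀ ≤ r₁) (hD₀ : 0 ≤ D₀)
    (hderiv : ∀ r ∈ Set.Icc r₀ r₁, HasDerivAt h (h' r) r)
    (hcont : ContinuousOn h' (Set.Icc r₀ r₁))
    (hbdry : r₀ ^ α * |h r₀| ^ 2 ≤ D₀) :
    -(2 / α) * r₁ ^ α * |h r₁| ^ 2 + ∫ r in r₀..r₁, r ^ (α - 1) * |h r| ^ 2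
      ≤ (4 / α ^ 2) * (∫ r in r₀..r₁, r ^ (α + 1) * |h' r| ^ 2) - (2 / α) * D₀ :=
  hardy_inequality_right_boundary_general α r₀ r₁ D₀ h h' hα hr₀ hr hderiv hcont hbdry
end

section
/- Let M > 0, set r₊ = 2M and μ(r) = 1 − 2M/r. For every C¹ function φ : [r₊, r'] → ℂ (with r' > r₊) there is a universal constant C (independent of φ, r', M) such that ∫_{r₊}^{r'} |φ(r)|² dr ≤ C ( ∫_{r₊}^{r'} μ(r)² r² |φ'(r)|² dr + (r' − r₊) |φ(r')|² ). -/
/-!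
Differentiating `(r - a) ‖φ r‖²` gives `‖φ‖² + 2 (r - a) ⟪φ, φ'⟫`, and its integral over `[a, b]` is
the boundary term `(b - a) ‖φ b‖²`, since the weight `r - a` kills the contribution of the
horizon `a`. Expanding `0 ≤ ‖φ + 2 (r - a) φ'‖²` bounds `‖φ‖²` pointwise by twice that derivative
plus `4 (r - a)² ‖φ'‖²`. At the Schwarzschild horizon `a = 2M` the weight `(r - 2M)²` is exactly
`μ(r)² r²`.
-/

open intervalIntegral MeasureTheory Set
open scoped RealInnerProductSpace

section Hardy

variable {E : Type*} [NormedAddCommGroup E] [InnerProductSpace ℝ E]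

theorem norm_sq_le_two_mul_add_four_mul (x y : E) (t : ℝ) :
    ‖x‖ ^ 2 ≤ 2 * (‖x‖ ^ 2 + t * (2 * ⟪x, y⟫)) + 4 * (t ^ 2 * ‖y‖ ^ 2) := by
  have h := norm_add_sq_real x ((2 * t) • y)
  rw [inner_smul_right, norm_smul, mul_pow, Real.norm_eq_abs, sq_abs] at h
  nlinarith [sq_nonneg ‖x + (2 * t) • y‖]

variable {φ φ' : ℝ → E} {a b : ℝ}

theorem hasDerivAt_sub_mul_norm_sq {r : ℝ} (hφ : HasDerivAt φ (φ' r) r) :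
    HasDerivAt (fun s ↦ (s - a) * ‖φ s‖ ^ 2) (‖φ r‖ ^ 2 + (r - a) * (2 * ⟪φ r, φ' r⟫)) r :=
  (((hasDerivAt_id' r).sub_const a).fun_mul hφ.norm_sq).congr_deriv (by ring)

theorem integral_norm_sq_add_eq_boundary
    (hφ : ∀ r ∈ uIcc a b, HasDerivAt φ (φ' r) r) (hφ' : ContinuousOn φ' (uIcc a b)) :
    ∫ r in a..b, (‖φ r‖ ^ 2 + (r - a) * (2 * ⟪φ r, φ' r⟫)) = (b - a) * ‖φ b‖ ^ 2 := by
  have hφc : ContinuousOn φ (uIcc a b) := HasDerivAt.continuousOn hφ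
  have hint : IntervalIntegrable (fun r ↦ ‖φ r‖ ^ 2 + (r - a) * (2 * ⟪φ r, φ' r⟫)) volume a b :=
    ContinuousOn.intervalIntegrable (by fun_prop)
  simpa using integral_eq_sub_of_hasDerivAt (fun r hr ↦ hasDerivAt_sub_mul_norm_sq (hφ r hr)) hint

theorem integral_norm_sq_le_of_hasDerivAt (hab : a ≤ b)
    (hφ : ∀ r ∈ Icc a b, HasDerivAt φ (φ' r) r) (hφ' : ContinuousOn φ' (Icc a b)) :
    ∫ r in a..b, ‖φ r‖ ^ 2
      ≤ 4 * (∫ r in a..b, (r - a) ^ 2 * ‖φ' r‖ ^ 2) + 2 * ((b - a) * ‖φ b‖ ^ 2) := by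
  rw [← uIcc_of_le hab] at hφ hφ'
  have hφc : ContinuousOn φ (uIcc a b) := HasDerivAt.continuousOn hφ
  have hg : IntervalIntegrable (fun r ↦ ‖φ r‖ ^ 2 + (r - a) * (2 * ⟪φ r, φ' r⟫)) volume a b :=
    ContinuousOn.intervalIntegrable (by fun_prop)
  have hw : IntervalIntegrable (fun r ↦ (r - a) ^ 2 * ‖φ' r‖ ^ 2) volume a b :=
    ContinuousOn.intervalIntegrable (by fun_prop)
  calc ∫ r in a..b, ‖φ r‖ ^ 2
      ≤ ∫ r in a..b, (2 * (‖φ r‖ ^ 2 + (r - a) * (2 * ⟪φ r, φ' r⟫))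
          + 4 * ((r - a) ^ 2 * ‖φ' r‖ ^ 2)) :=
        integral_mono_on hab (hφc.norm.pow 2).intervalIntegrable
          ((hg.const_mul 2).add (hw.const_mul 4))
          fun r _ ↦ norm_sq_le_two_mul_add_four_mul _ _ _
    _ = 4 * (∫ r in a..b, (r - a) ^ 2 * ‖φ' r‖ ^ 2) + 2 * ((b - a) * ‖φ b‖ ^ 2) := by
        rw [integral_add (hg.const_mul 2) (hw.const_mul 4), intervalIntegral.integral_const_mul,
          intervalIntegral.integral_const_mul, integral_norm_sq_add_eq_boundary hφ hφ']
        ring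

end Hardy

/-- Hardy inequality near the Schwarzschild horizon: there is a universal constant `C`
(independent of `M`, `r'` and `φ`) such that for every mass `M > 0`, every `r' > 2M`
(with `r₊ = 2M` and `μ(r) = 1 − 2M/r`) and every `C¹` function `φ : [r₊, r'] → ℂ`,
`∫_{r₊}^{r'} |φ(r)|² dr ≤ C ( ∫_{r₊}^{r'} μ(r)² r² |φ'(r)|² dr + (r' − r₊) |φ(r')|² )`. -/
theorem hardy_inequality_horizon :
    ∃ C : ℝ, 0 < C ∧ ∀ (M r' : ℝ) (φ φ' : ℝ → ℂ),
      0 < M → 2 * M < r' →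
      (∀ r ∈ Set.Icc (2 * M) r', HasDerivAt φ (φ' r) r) →
      ContinuousOn φ' (Set.Icc (2 * M) r') →
      ∫ r in (2 * M)..r', ‖φ r‖ ^ 2
        ≤ C * ((∫ r in (2 * M)..r', (1 - 2 * M / r) ^ 2 * r ^ 2 * ‖φ' r‖ ^ 2)
            + (r' - 2 * M) * ‖φ r'‖ ^ 2) := by
  refine ⟨4, by norm_num, fun M r' φ φ' hM hr hφ hφ' ↦ ?_⟩
  have hweight : ∫ r in (2 * M)..r', (1 - 2 * M / r) ^ 2 * r ^ 2 * ‖φ' r‖ ^ 2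
      = ∫ r in (2 * M)..r', (r - 2 * M) ^ 2 * ‖φ' r‖ ^ 2 := by
    refine integral_congr fun r hr' ↦ ?_
    have hr0 : r ≠ 0 := by
      rw [uIcc_of_le hr.le] at hr'
      linarith [hr'.1]
    field_simp
  have hboundary : 0 ≤ (r' - 2 * M) * ‖φ r'‖ ^ 2 := mul_nonneg (by linarith) (by positivity)
  rw [hweight]
  linarith [integral_norm_sq_le_of_hasDerivAt hr.le hφ hφ']
end

section
/- Let f : [τ₀, ∞) → (0, ∞) be continuous, and suppose there exist positive constants E₀, C₀, b, p such that for all τ₀ ≤ τ₁ < τ₂ one has both f(τ₂) + b∫_{τ₁}^{τ₂} f(τ) dτ ≤ f(τ₁) + E₀ (τ₂ − τ₁) τ₁^{−p} and f(τ₂) + b∫_{τ₁}^{τ₂} f(τ) dτ ≤ f(τ₁) + C₀ (τ₂ − τ₁) f(τ₀). Then there exists a constant C depending only on E₀, C₀, b, p (and τ₀ ≥ 1) such that f(τ) ≤ C τ^{−p} (f(τ₀) + E₀) for all τ ≥ τ₀. -/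
/-!
For `s ∈ [a, a + L]` the energy inequality on `[s, a + L]` gives
`f s ≥ f (a + L) - E₀ L a^{-p}`; integrating this over `[a, a + L]` and inserting it into the
inequality on `[a, a + L]` gives `f (a + L) (1 + b L) ≤ f a + E₀ L a^{-p} (1 + b L)`.
With `L = 1 / b`, `f` is halved over each window up to an error `E₀ b⁻¹ a^{-p}`, while
`(τ - L)^{-p} ≤ (3/2) τ^{-p}` once `τ` is large. Hence the bound `f τ ≤ C τ^{-p} (f τ₀ + E₀)`
passes from each window to the next, and on the initial window `[τ₀, T]` it holds
because `f τ ≤ f τ₀ + E₀ (τ - τ₀)` there.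
-/

open Set Filter

theorem forall_ge_of_step {P : ℝ → Prop} {τ₀ T L : ℝ} (hL : 0 < L) (hT : τ₀ + L ≤ T)
    (base : ∀ τ ∈ Icc τ₀ T, P τ) (step : ∀ τ, T < τ → P (τ - L) → P τ) :
    ∀ τ, τ₀ ≤ τ → P τ := by
  have upto : ∀ n : ℕ, ∀ τ ∈ Icc τ₀ (T + n * L), P τ := by
    intro n
    induction n with
    | zero => simpa using base
    | succ n ih =>
      intro τ ⟨hτ₀, hτ⟩
      rcases le_or_gt τ T with hτT | hτT
      · exact base τ ⟨hτ₀, hτT⟩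
      · refine step τ hτT (ih _ ⟨by linarith, ?_⟩)
        push_cast at hτ
        linarith
  intro τ hτ
  obtain ⟨n, hn⟩ := exists_nat_ge ((τ - T) / L)
  exact upto n τ ⟨hτ, by rw [div_le_iff₀ hL] at hn; linarith⟩

theorem eventually_rpow_neg_sub_le (L : ℝ) {p r : ℝ} (hp : 0 < p) (hr : 1 < r) :
    ∀ᶠ τ in atTop, (τ - L) ^ (-p) ≤ r * τ ^ (-p) := by
  set θ := r ^ (-p⁻¹)
  have hθ₀ : 0 < θ := by positivity
  have hθ₁ : θ < 1 := Real.rpow_lt_one_of_one_lt_of_neg hr (by simpa using hp)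
  have hθp : θ ^ (-p) = r := by
    rw [← Real.rpow_mul (by linarith), neg_mul_neg, inv_mul_cancel₀ hp.ne', Real.rpow_one]
  filter_upwards [eventually_gt_atTop 0, eventually_ge_atTop (L / (1 - θ))] with τ hτ hτL
  have hθτ : θ * τ ≤ τ - L := by
    rw [div_le_iff₀ (by linarith)] at hτL
    linarith
  calc (τ - L) ^ (-p) ≤ (θ * τ) ^ (-p) :=
        Real.rpow_le_rpow_of_nonpos (by positivity) hθτ (by linarith)
    _ = r * τ ^ (-p) := by rw [Real.mul_rpow hθ₀.le hτ.le, hθp]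

def EnergyDissipation (f : ℝ → ℝ) (τ₀ b E₀ p : ℝ) : Prop :=
  ∀ τ₁ τ₂, τ₀ ≤ τ₁ → τ₁ < τ₂ →
    f τ₂ + b * ∫ τ in τ₁..τ₂, f τ ≤ f τ₁ + E₀ * (τ₂ - τ₁) * τ₁ ^ (-p)

namespace EnergyDissipation

variable {f : ℝ → ℝ} {τ₀ b E₀ p : ℝ}

theorem le_add (h : EnergyDissipation f τ₀ b E₀ p) (hb : 0 ≤ b)
    (hpos : ∀ τ, τ₀ ≤ τ → 0 ≤ f τ) {τ₁ τ₂ : ℝ} (h₁ : τ₀ ≤ τ₁) (h₁₂ : τ₁ ≤ τ₂) :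
    f τ₂ ≤ f τ₁ + E₀ * (τ₂ - τ₁) * τ₁ ^ (-p) := by
  rcases h₁₂.eq_or_lt with rfl | h₁₂
  · simp
  have hint : 0 ≤ ∫ τ in τ₁..τ₂, f τ :=
    intervalIntegral.integral_nonneg h₁₂.le fun τ hτ ↦ hpos τ (h₁.trans hτ.1)
  nlinarith [h τ₁ τ₂ h₁ h₁₂]

theorem mul_one_add_le (h : EnergyDissipation f τ₀ b E₀ p) (hb : 0 ≤ b) (hE₀ : 0 ≤ E₀)
    (hp : 0 ≤ p) (hτ₀ : 0 < τ₀) (hpos : ∀ τ, τ₀ ≤ τ → 0 ≤ f τ)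
    (hcont : ContinuousOn f (Ici τ₀)) {a L : ℝ} (ha : τ₀ ≤ a) (hL : 0 < L) :
    f (a + L) * (1 + b * L) ≤ f a + E₀ * L * a ^ (-p) * (1 + b * L) := by
  set e := E₀ * L * a ^ (-p)
  have hlow : ∀ s ∈ Icc a (a + L), f (a + L) - e ≤ f s := by
    intro s hs
    have hs₀ : 0 < s := hτ₀.trans_le (ha.trans hs.1)
    have herr : E₀ * (a + L - s) * s ^ (-p) ≤ e := by
      have hs_pow : s ^ (-p) ≤ a ^ (-p) :=
        Real.rpow_le_rpow_of_nonpos (hτ₀.trans_le ha) hs.1 (by linarith)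
      have hgap : E₀ * (a + L - s) ≤ E₀ * L := by nlinarith [hs.1]
      exact mul_le_mul hgap hs_pow (by positivity) (by positivity)
    linarith [h.le_add hb hpos (ha.trans hs.1) hs.2]
  have hint : L * (f (a + L) - e) ≤ ∫ s in a..a + L, f s := by
    have hcont' : ContinuousOn f (uIcc a (a + L)) := by
      rw [uIcc_of_le (by linarith)]
      exact hcont.mono fun s hs ↦ ha.trans hs.1
    have := intervalIntegral.integral_mono_on (μ := MeasureTheory.volume) (by linarith)
      intervalIntegrable_const hcont'.intervalIntegrable hlow
    rwa [intervalIntegral.integral_const, smul_eq_mul, add_sub_cancel_left] at this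
  nlinarith [h a (a + L) ha (by linarith), mul_le_mul_of_nonneg_left hint hb]

theorem le_half_add (h : EnergyDissipation f τ₀ b E₀ p) (hb : 0 < b) (hE₀ : 0 ≤ E₀)
    (hp : 0 ≤ p) (hτ₀ : 0 < τ₀) (hpos : ∀ τ, τ₀ ≤ τ → 0 ≤ f τ)
    (hcont : ContinuousOn f (Ici τ₀)) {a : ℝ} (ha : τ₀ ≤ a) :
    f (a + b⁻¹) ≤ f a / 2 + E₀ * b⁻¹ * a ^ (-p) := by
  have := h.mul_one_add_le hb.le hE₀ hp hτ₀ hpos hcont ha (inv_pos.2 hb)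
  rw [mul_inv_cancel₀ hb.ne', one_add_one_eq_two] at this
  linarith

theorem le_of_mem_Icc (h : EnergyDissipation f τ₀ b E₀ p) (hb : 0 ≤ b) (hE₀ : 0 ≤ E₀)
    (hp : 0 ≤ p) (hτ₀ : 1 ≤ τ₀) (hpos : ∀ τ, τ₀ ≤ τ → 0 ≤ f τ) {T τ : ℝ}
    (hτ : τ ∈ Icc τ₀ T) :
    f τ ≤ (1 + T) * T ^ p * τ ^ (-p) * (f τ₀ + E₀) := by
  have hτ_pos : 0 < τ := by linarith [hτ.1]
  have hT : 0 ≤ T := by linarith [hτ.1, hτ.2]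
  have hlin : f τ ≤ f τ₀ + E₀ * T := by
    have hpow : τ₀ ^ (-p) ≤ 1 := Real.rpow_le_one_of_one_le_of_nonpos hτ₀ (by linarith)
    have hgap : E₀ * (τ - τ₀) ≤ E₀ * T := by nlinarith [hτ.2]
    have herr : E₀ * (τ - τ₀) * τ₀ ^ (-p) ≤ E₀ * (τ - τ₀) :=
      mul_le_of_le_one_right (by nlinarith [hτ.1]) hpow
    linarith [h.le_add hb hpos le_rfl hτ.1]
  have hratio : 1 ≤ T ^ p * τ ^ (-p) := by
    rw [Real.rpow_neg hτ_pos.le, ← div_eq_mul_inv, one_le_div (by positivity)]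
    exact Real.rpow_le_rpow hτ_pos.le hτ.2 hp
  have hf₀ := hpos τ₀ le_rfl
  calc f τ ≤ (1 + T) * (f τ₀ + E₀) := by nlinarith
    _ ≤ (1 + T) * (f τ₀ + E₀) * (T ^ p * τ ^ (-p)) := le_mul_of_one_le_right (by positivity) hratio
    _ = (1 + T) * T ^ p * τ ^ (-p) * (f τ₀ + E₀) := by ring

-- One step loses half of the bound and the weight grows by at most `3 / 2`;
-- `(C / 2 + 1 / b) * (3 / 2) ≤ C` is where `C ≥ 6 / b` comes from.
theorem le_of_le_sub_inv (h : EnergyDissipation f τ₀ b E₀ p) (hb : 0 < b) (hE₀ : 0 ≤ E₀)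
    (hp : 0 ≤ p) (hτ₀ : 0 < τ₀) (hpos : ∀ τ, τ₀ ≤ τ → 0 ≤ f τ)
    (hcont : ContinuousOn f (Ici τ₀)) {A C τ : ℝ} (hA : E₀ ≤ A) (hC : 6 * b⁻¹ ≤ C)
    (hτ : τ₀ ≤ τ - b⁻¹) (hratio : (τ - b⁻¹) ^ (-p) ≤ 3 / 2 * τ ^ (-p))
    (hprev : f (τ - b⁻¹) ≤ C * (τ - b⁻¹) ^ (-p) * A) :
    f τ ≤ C * τ ^ (-p) * A := by
  have hb' : 0 < b⁻¹ := inv_pos.2 hb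
  have ha_pow : 0 < (τ - b⁻¹) ^ (-p) := Real.rpow_pos_of_pos (by linarith) _
  have hτ_pow : 0 < τ ^ (-p) := Real.rpow_pos_of_pos (by linarith) _
  have hA₀ : 0 ≤ A := hE₀.trans hA
  calc f τ ≤ f (τ - b⁻¹) / 2 + E₀ * b⁻¹ * (τ - b⁻¹) ^ (-p) := by
        simpa using h.le_half_add hb hE₀ hp hτ₀ hpos hcont hτ
    _ ≤ C * (τ - b⁻¹) ^ (-p) * A / 2 + A * b⁻¹ * (τ - b⁻¹) ^ (-p) := by gcongr
    _ = (C / 2 + b⁻¹) * A * (τ - b⁻¹) ^ (-p) := by ring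
    _ ≤ (C / 2 + b⁻¹) * A * (3 / 2 * τ ^ (-p)) :=
        mul_le_mul_of_nonneg_left hratio (mul_nonneg (by linarith) hA₀)
    _ = (C / 2 + b⁻¹) * (3 / 2) * (τ ^ (-p) * A) := by ring
    _ ≤ C * (τ ^ (-p) * A) := by gcongr; linarith
    _ = C * τ ^ (-p) * A := by ring

end EnergyDissipation

theorem gronwall_polynomial_decay_general
    (τ₀ E₀ b p : ℝ) (f : ℝ → ℝ)
    (hτ₀ : 1 ≤ τ₀) (hE₀ : 0 < E₀) (hb : 0 < b) (hp : 0 < p)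
    (hcont : ContinuousOn f (Set.Ici τ₀))
    (hpos : ∀ τ, τ₀ ≤ τ → 0 < f τ)
    (h1 : ∀ τ₁ τ₂, τ₀ ≤ τ₁ → τ₁ < τ₂ →
      f τ₂ + b * ∫ τ in τ₁..τ₂, f τ ≤ f τ₁ + E₀ * (τ₂ - τ₁) * τ₁ ^ (-p)) :
    ∃ C : ℝ, 0 < C ∧ ∀ τ, τ₀ ≤ τ → f τ ≤ C * τ ^ (-p) * (f τ₀ + E₀) := by
  have h : EnergyDissipation f τ₀ b E₀ p := h1
  have hnonneg : ∀ τ, τ₀ ≤ τ → 0 ≤ f τ := fun τ hτ ↦ (hpos τ hτ).le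
  have hA : 0 < f τ₀ + E₀ := by linarith [hpos τ₀ le_rfl]
  obtain ⟨T, hT⟩ := eventually_atTop.1 ((eventually_ge_atTop (τ₀ + b⁻¹)).and
    (eventually_rpow_neg_sub_le b⁻¹ hp (by norm_num : (1 : ℝ) < 3 / 2)))
  obtain ⟨C, hCT, hCb⟩ : ∃ C, (1 + T) * T ^ p ≤ C ∧ 6 * b⁻¹ ≤ C :=
    ⟨_, le_max_left _ _, le_max_right _ _⟩
  have hC : 0 < C := by linarith [inv_pos.2 hb]
  refine ⟨C, hC, forall_ge_of_step (inv_pos.2 hb) (hT T le_rfl).1 (fun τ hτ ↦ ?_) fun τ hτ ↦ ?_⟩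
  · have hτ_pow : 0 < τ ^ (-p) := Real.rpow_pos_of_pos (by linarith [hτ.1]) _
    calc f τ ≤ (1 + T) * T ^ p * τ ^ (-p) * (f τ₀ + E₀) :=
          h.le_of_mem_Icc hb.le hE₀.le hp.le hτ₀ hnonneg hτ
      _ ≤ C * τ ^ (-p) * (f τ₀ + E₀) := by gcongr
  · obtain ⟨hτ_ge, hratio⟩ := hT τ hτ.le
    exact h.le_of_le_sub_inv hb hE₀.le hp.le (by linarith) hnonneg hcont
      (by linarith [hpos τ₀ le_rfl]) hCb (by linarith) hratio

/-- A Grönwall-type decay lemma: a continuous positive function `f` on `[τ₀, ∞)`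
(with `τ₀ ≥ 1`) satisfying, for all `τ₀ ≤ τ₁ < τ₂`, both
`f(τ₂) + b ∫_{τ₁}^{τ₂} f ≤ f(τ₁) + E₀ (τ₂ − τ₁) τ₁^{−p}` and
`f(τ₂) + b ∫_{τ₁}^{τ₂} f ≤ f(τ₁) + C₀ (τ₂ − τ₁) f(τ₀)`,
decays polynomially: there is a constant `C` (depending only on `E₀, C₀, b, p, τ₀`)
with `f(τ) ≤ C τ^{−p} (f(τ₀) + E₀)` for all `τ ≥ τ₀`. -/
theorem gronwall_polynomial_decay
    (τ₀ E₀ C₀ b p : ℝ) (f : ℝ → ℝ)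
    (hτ₀ : 1 ≤ τ₀) (hE₀ : 0 < E₀) (hC₀ : 0 < C₀) (hb : 0 < b) (hp : 0 < p)
    (hcont : ContinuousOn f (Set.Ici τ₀))
    (hpos : ∀ τ, τ₀ ≤ τ → 0 < f τ)
    (h1 : ∀ τ₁ τ₂, τ₀ ≤ τ₁ → τ₁ < τ₂ →
      f τ₂ + b * ∫ τ in τ₁..τ₂, f τ ≤ f τ₁ + E₀ * (τ₂ - τ₁) * τ₁ ^ (-p))
    (h2 : ∀ τ₁ τ₂, τ₀ ≤ τ₁ → τ₁ < τ₂ →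
      f τ₂ + b * ∫ τ in τ₁..τ₂, f τ ≤ f τ₁ + C₀ * (τ₂ - τ₁) * f τ₀) :
    ∃ C : ℝ, 0 < C ∧ ∀ τ, τ₀ ≤ τ → f τ ≤ C * τ ^ (-p) * (f τ₀ + E₀) :=
  gronwall_polynomial_decay_general τ₀ E₀ b p f hτ₀ hE₀ hb hp hcont hpos h1
end

section
/- Let M > 0, r > 2M, μ = 1 − 2M/r, Δ = r² − 2Mr, f(r) = 2(r−2M)(r−3M)/r², q(r) = 3MΔ/r⁴. Define B^r = (1/2)(Δf)' − 2f(r−M) + Δ(q + f/r), B^a = −(1/2)f' + (q + f/r), and B⁰ = −(1/2)(Δ·(q + f/r)')' + r²( (r^{−3}B^r)' + r^{−4}B^r ) + V_P·(q + f/r) − (1/2)(V_P f)', where V_P(r) = −2M/r and ' denotes d/dr. Then B^r = 6Mμ², B^a = 2r^{−3}(r−3M)², and B⁰ = −3M r^{−4}(3r² − 20Mr + 30M²). -/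
/-- The Morawetz multiplier radial function `f(r) = 2(r−2M)(r−3M)/r²` on Schwarzschild. -/
noncomputable def fMor (M : ℝ) (r : ℝ) : ℝ := 2 * (r - 2 * M) * (r - 3 * M) / r ^ 2

/-- The Morawetz multiplier zeroth-order function `q(r) = 3MΔ/r⁴`, `Δ = r² − 2Mr`. -/
noncomputable def qMor (M : ℝ) (r : ℝ) : ℝ := 3 * M * (r ^ 2 - 2 * M * r) / r ^ 4

/-- The bulk coefficient `B^r = (1/2)(Δf)' − 2f(r−M) + Δ(q + f/r)`. -/
noncomputable def BrMor (M : ℝ) (r : ℝ) : ℝ :=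
  (1 / 2) * deriv (fun x => (x ^ 2 - 2 * M * x) * fMor M x) r
    - 2 * fMor M r * (r - M) + (r ^ 2 - 2 * M * r) * (qMor M r + fMor M r / r)

/-- The bulk coefficient `B^a = −(1/2)f' + (q + f/r)`. -/
noncomputable def BaMor (M : ℝ) (r : ℝ) : ℝ :=
  -(1 / 2) * deriv (fMor M) r + (qMor M r + fMor M r / r)

/-- The bulk coefficient
`B⁰ = −(1/2)(Δ (q + f/r)')' + r²((r^{−3}B^r)' + r^{−4}B^r) + V_P (q + f/r) − (1/2)(V_P f)'`,
with `V_P(r) = −2M/r`. -/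
noncomputable def B0Mor (M : ℝ) (r : ℝ) : ℝ :=
  -(1 / 2) * deriv (fun x => (x ^ 2 - 2 * M * x) * deriv (fun y => qMor M y + fMor M y / y) x) r
    + r ^ 2 * (deriv (fun x => (x ^ 3)⁻¹ * BrMor M x) r + (r ^ 4)⁻¹ * BrMor M r)
    + (-2 * M / r) * (qMor M r + fMor M r / r)
    - (1 / 2) * deriv (fun x => (-2 * M / x) * fMor M x) r

/- Away from `r = 0`, every function that gets differentiated in `B^r`, `B^a` and `B⁰` is a cubic
polynomial divided by a power of `r`, so its derivative is explicit by the quotient rule. After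
substituting these derivatives, the three formulas are identities of rational functions. -/

open Filter Topology

lemma hasDerivAt_cubic (a b c d r : ℝ) :
    HasDerivAt (fun x => a * x ^ 3 + b * x ^ 2 + c * x + d) (3 * a * r ^ 2 + 2 * b * r + c) r := by
  have h := ((((hasDerivAt_pow 3 r).const_mul a).add ((hasDerivAt_pow 2 r).const_mul b)).add
    ((hasDerivAt_id r).const_mul c)).add_const d
  refine h.congr_deriv ?_
  push_cast
  ring

lemma HasDerivAt.div_pow {g : ℝ → ℝ} {g' r : ℝ} (hg : HasDerivAt g g' r) (k : ℕ) (hr : r ≠ 0) :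
    HasDerivAt (fun x => g x / x ^ k) ((g' * r - k * g r) / r ^ (k + 1)) r := by
  refine (hg.div (hasDerivAt_pow k r) (pow_ne_zero k hr)).congr_deriv ?_
  cases k with
  | zero => simp [mul_div_cancel_right₀ _ hr]
  | succ n =>
    simp only [Nat.add_sub_cancel]
    field_simp
    ring

lemma deriv_eq_of_eq_cubic_div_pow {F : ℝ → ℝ} {a b c d r : ℝ} {k : ℕ}
    (hF : ∀ x ≠ 0, F x = (a * x ^ 3 + b * x ^ 2 + c * x + d) / x ^ k) (hr : r ≠ 0) :
    deriv F r =
      ((3 * a * r ^ 2 + 2 * b * r + c) * r - k * (a * r ^ 3 + b * r ^ 2 + c * r + d)) / r ^ (k + 1) := by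
  have hFG : F =ᶠ[𝓝 r] fun x => (a * x ^ 3 + b * x ^ 2 + c * x + d) / x ^ k :=
    (eventually_ne_nhds hr).mono hF
  rw [hFG.deriv_eq]
  exact ((hasDerivAt_cubic a b c d r).div_pow k hr).deriv

section

variable (M : ℝ) {r : ℝ}

lemma qMor_add_fMor_div (hr : r ≠ 0) :
    qMor M r + fMor M r / r = (2 * r ^ 2 - 7 * M * r + 6 * M ^ 2) / r ^ 3 := by
  simp only [qMor, fMor]
  field_simp
  ring

lemma deriv_qMor_add_fMor_div (hr : r ≠ 0) :
    deriv (fun x => qMor M x + fMor M x / x) r = -2 * (r ^ 2 - 7 * M * r + 9 * M ^ 2) / r ^ 4 := by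
  rw [deriv_eq_of_eq_cubic_div_pow (a := 0) (b := 2) (c := -7 * M) (d := 6 * M ^ 2) (k := 3)
    (fun x hx => by rw [qMor_add_fMor_div M hx]; ring) hr]
  field_simp
  ring

lemma BrMor_eq (hr : r ≠ 0) : BrMor M r = 6 * M * (1 - 2 * M / r) ^ 2 := by
  rw [BrMor, deriv_eq_of_eq_cubic_div_pow (a := 2) (b := -14 * M) (c := 32 * M ^ 2)
    (d := -24 * M ^ 3) (k := 1) (fun x hx => by simp only [fMor]; field_simp; ring) hr]
  simp only [qMor, fMor]
  field_simp
  ring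

lemma BaMor_eq (hr : r ≠ 0) : BaMor M r = 2 * (r ^ 3)⁻¹ * (r - 3 * M) ^ 2 := by
  rw [BaMor, deriv_eq_of_eq_cubic_div_pow (a := 0) (b := 2) (c := -10 * M) (d := 12 * M ^ 2)
    (k := 2) (fun x _ => by simp only [fMor]; ring) hr, qMor_add_fMor_div M hr]
  field_simp
  ring

lemma B0Mor_eq (hr : r ≠ 0) :
    B0Mor M r = -3 * M * (r ^ 4)⁻¹ * (3 * r ^ 2 - 20 * M * r + 30 * M ^ 2) := by
  rw [B0Mor,
    deriv_eq_of_eq_cubic_div_pow (a := -2) (b := 18 * M) (c := -46 * M ^ 2) (d := 36 * M ^ 3)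
      (k := 3) (fun x hx => by rw [deriv_qMor_add_fMor_div M hx]; field_simp; ring) hr,
    deriv_eq_of_eq_cubic_div_pow (a := 0) (b := 6 * M) (c := -24 * M ^ 2) (d := 24 * M ^ 3)
      (k := 5) (fun x hx => by rw [BrMor_eq M hx]; field_simp; ring) hr,
    deriv_eq_of_eq_cubic_div_pow (a := 0) (b := -4 * M) (c := 20 * M ^ 2) (d := -24 * M ^ 3)
      (k := 3) (fun x hx => by simp only [fMor]; field_simp; ring) hr,
    BrMor_eq M hr, qMor_add_fMor_div M hr]
  field_simp
  ring

end

/-- The explicit values of the bulk coefficients in the Morawetz estimate on Schwarzschild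
with the classical multiplier `f = 2(r−2M)(r−3M)/r²`, `q = 3MΔ/r⁴`:
`B^r = 6Mμ²`, `B^a = 2r^{−3}(r−3M)²`, and `B⁰ = −3Mr^{−4}(3r² − 20Mr + 30M²)`. -/
theorem morawetz_bulk_coefficients (M : ℝ) (hM : 0 < M) (r : ℝ) (hr : 2 * M < r) :
    BrMor M r = 6 * M * (1 - 2 * M / r) ^ 2 ∧
    BaMor M r = 2 * (r ^ 3)⁻¹ * (r - 3 * M) ^ 2 ∧
    B0Mor M r = -3 * M * (r ^ 4)⁻¹ * (3 * r ^ 2 - 20 * M * r + 30 * M ^ 2) := by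
  have hr₀ : r ≠ 0 := by linarith
  exact ⟨BrMor_eq M hr₀, BaMor_eq M hr₀, B0Mor_eq M hr₀⟩
end

section
/- Let M > 0 and r > 2M, with μ = 1 − 2M/r, Δ = r² − 2Mr, f(r) = 2(r−2M)(r−3M)/r², q(r) = 3MΔ/r⁴, B^a(r) = 2r^{−3}(r−3M)², B⁰(r) = −3M r^{−4}(3r² − 20Mr + 30M²). Then r^{−2}(B^a + B⁰) − d/dr [ (Δ^{1/2}/2)( d/dr( f(r−3M)/(2r²Δ^{1/2}) ) − (r−3M) q /(r² Δ^{1/2}) ) ] = (3/2) M r^{−6} (6r² − 32Mr + 45M²), and this expression is strictly positive for all r > 2M (indeed 6r² − 32Mr + 45M² > 0 for all real r since its discriminant is negative). -/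
/-!
On `r > 2M` put `Δ = r² − 2Mr`. Since `f (r − 3M) / (2r²√Δ) = (r − 3M)² √Δ / r⁵`, the derivative of
this quotient is `√Δ` times a rational function plus a rational function over `√Δ`, and multiplying
by `√Δ / 2` clears every square root: the expression under the outer `d/dr` is the rational function
`(−2r³ + 20Mr² − 63M²r + 63M³) / (2r⁵)`. Differentiating it and collecting terms gives
`(3/2) M r⁻⁶ (6r² − 32Mr + 45M²)`, and `6r² − 32Mr + 45M² = 6 (r − 8M/3)² + 7M²/3`.
-/

open Filter Topology

namespace Morawetz

variable {M x : ℝ}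

lemma sq_sub_two_mul_mul_pos (hM : 0 ≤ M) (hx : 2 * M < x) : 0 < x ^ 2 - 2 * M * x := by
  nlinarith

lemma quadratic_pos (hM : M ≠ 0) (x : ℝ) : 0 < 6 * x ^ 2 - 32 * M * x + 45 * M ^ 2 := by
  have hM2 : 0 < M ^ 2 := by positivity
  nlinarith [sq_nonneg (3 * x - 8 * M)]

lemma inner_quotient_eq (hM : 0 ≤ M) (hx : 2 * M < x) :
    (2 * (x - 2 * M) * (x - 3 * M) / x ^ 2) * (x - 3 * M)
        / (2 * x ^ 2 * Real.sqrt (x ^ 2 - 2 * M * x))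
      = (x - 3 * M) ^ 2 / x ^ 5 * Real.sqrt (x ^ 2 - 2 * M * x) := by
  have hΔ := sq_sub_two_mul_mul_pos hM hx
  have hx0 : x ≠ 0 := by linarith
  have hs : Real.sqrt (x ^ 2 - 2 * M * x) ≠ 0 := (Real.sqrt_pos.2 hΔ).ne'
  have hs2 := Real.sq_sqrt hΔ.le
  generalize Real.sqrt (x ^ 2 - 2 * M * x) = s at hs hs2 ⊢
  field_simp
  linear_combination -(x - 3 * M) ^ 2 * hs2

lemma hasDerivAt_inner_quotient (hM : 0 ≤ M) (hx : 2 * M < x) :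
    HasDerivAt (fun y => (y - 3 * M) ^ 2 / y ^ 5 * Real.sqrt (y ^ 2 - 2 * M * y))
      ((x - 3 * M) * (15 * M - 3 * x) / x ^ 6 * Real.sqrt (x ^ 2 - 2 * M * x)
        + (x - 3 * M) ^ 2 / x ^ 5 * ((2 * x - 2 * M) / (2 * Real.sqrt (x ^ 2 - 2 * M * x)))) x := by
  have hx0 : x ≠ 0 := by linarith
  have hA : HasDerivAt (fun y => (y - 3 * M) ^ 2 / y ^ 5) ((x - 3 * M) * (15 * M - 3 * x) / x ^ 6) x := by
    refine ((((hasDerivAt_id' x).sub_const (3 * M)).fun_pow 2).div (hasDerivAt_pow 5 x)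
      (pow_ne_zero 5 hx0)).congr_deriv ?_
    field_simp
    ring
  have hΔ : HasDerivAt (fun y => y ^ 2 - 2 * M * y) (2 * x - 2 * M) x := by
    refine ((hasDerivAt_pow 2 x).sub ((hasDerivAt_id' x).const_mul (2 * M))).congr_deriv ?_
    ring
  exact hA.mul (hΔ.sqrt (sq_sub_two_mul_mul_pos hM hx).ne')

lemma outer_eq_rational (hM : 0 ≤ M) (hx : 2 * M < x) :
    (Real.sqrt (x ^ 2 - 2 * M * x) / 2) *
        (deriv (fun y => (2 * (y - 2 * M) * (y - 3 * M) / y ^ 2) * (y - 3 * M)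
            / (2 * y ^ 2 * Real.sqrt (y ^ 2 - 2 * M * y))) x
          - (x - 3 * M) * (3 * M * (x ^ 2 - 2 * M * x) / x ^ 4)
            / (x ^ 2 * Real.sqrt (x ^ 2 - 2 * M * x)))
      = (-2 * x ^ 3 + 20 * M * x ^ 2 - 63 * M ^ 2 * x + 63 * M ^ 3) / (2 * x ^ 5) := by
  have hinner : (fun y => (2 * (y - 2 * M) * (y - 3 * M) / y ^ 2) * (y - 3 * M)
        / (2 * y ^ 2 * Real.sqrt (y ^ 2 - 2 * M * y)))
      =ᶠ[𝓝 x] fun y => (y - 3 * M) ^ 2 / y ^ 5 * Real.sqrt (y ^ 2 - 2 * M * y) :=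
    eventually_of_mem (Ioi_mem_nhds hx) fun y hy => inner_quotient_eq hM hy
  rw [hinner.deriv_eq, (hasDerivAt_inner_quotient hM hx).deriv]
  have hΔ := sq_sub_two_mul_mul_pos hM hx
  have hx0 : x ≠ 0 := by linarith
  have hs : Real.sqrt (x ^ 2 - 2 * M * x) ≠ 0 := (Real.sqrt_pos.2 hΔ).ne'
  have hs2 := Real.sq_sqrt hΔ.le
  generalize Real.sqrt (x ^ 2 - 2 * M * x) = s at hs hs2 ⊢
  field_simp
  linear_combination (x - 3 * M) * (15 * M - 3 * x) * hs2

lemma hasDerivAt_rational (hx : x ≠ 0) :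
    HasDerivAt (fun y => (-2 * y ^ 3 + 20 * M * y ^ 2 - 63 * M ^ 2 * y + 63 * M ^ 3) / (2 * y ^ 5))
      ((2 * x ^ 3 - 30 * M * x ^ 2 + 126 * M ^ 2 * x - 315 * M ^ 3 / 2) / x ^ 6) x := by
  have hP : HasDerivAt (fun y => -2 * y ^ 3 + 20 * M * y ^ 2 - 63 * M ^ 2 * y + 63 * M ^ 3)
      (-6 * x ^ 2 + 40 * M * x - 63 * M ^ 2) x := by
    refine ((((hasDerivAt_pow 3 x).const_mul (-2)).add ((hasDerivAt_pow 2 x).const_mul (20 * M))).sub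
      ((hasDerivAt_id' x).const_mul (63 * M ^ 2))).add_const (63 * M ^ 3) |>.congr_deriv ?_
    ring
  refine (hP.div ((hasDerivAt_pow 5 x).const_mul 2) (by positivity)).congr_deriv ?_
  field_simp
  ring

lemma deriv_outer (hM : 0 ≤ M) (hx : 2 * M < x) :
    deriv (fun x => (Real.sqrt (x ^ 2 - 2 * M * x) / 2) *
        (deriv (fun y => (2 * (y - 2 * M) * (y - 3 * M) / y ^ 2) * (y - 3 * M)
            / (2 * y ^ 2 * Real.sqrt (y ^ 2 - 2 * M * y))) x
          - (x - 3 * M) * (3 * M * (x ^ 2 - 2 * M * x) / x ^ 4)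
            / (x ^ 2 * Real.sqrt (x ^ 2 - 2 * M * x)))) x
      = (2 * x ^ 3 - 30 * M * x ^ 2 + 126 * M ^ 2 * x - 315 * M ^ 3 / 2) / x ^ 6 := by
  have houter : (fun x => (Real.sqrt (x ^ 2 - 2 * M * x) / 2) *
        (deriv (fun y => (2 * (y - 2 * M) * (y - 3 * M) / y ^ 2) * (y - 3 * M)
            / (2 * y ^ 2 * Real.sqrt (y ^ 2 - 2 * M * y))) x
          - (x - 3 * M) * (3 * M * (x ^ 2 - 2 * M * x) / x ^ 4)
            / (x ^ 2 * Real.sqrt (x ^ 2 - 2 * M * x))))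
      =ᶠ[𝓝 x] fun y => (-2 * y ^ 3 + 20 * M * y ^ 2 - 63 * M ^ 2 * y + 63 * M ^ 3) / (2 * y ^ 5) :=
    eventually_of_mem (Ioi_mem_nhds hx) fun y hy => outer_eq_rational hM hy
  rw [houter.deriv_eq, (hasDerivAt_rational (by linarith)).deriv]

end Morawetz

/-- The key positivity computation in the Morawetz estimate for the Dirac wave system on
Schwarzschild: with `μ = 1 − 2M/r`, `Δ = r² − 2Mr`, `f = 2(r−2M)(r−3M)/r²`, `q = 3MΔ/r⁴`,
`B^a = 2r^{−3}(r−3M)²` and `B⁰ = −3Mr^{−4}(3r² − 20Mr + 30M²)`, one has, for `r > 2M`,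
`r^{−2}(B^a + B⁰) − d/dr[ (Δ^{1/2}/2)( (f(r−3M)/(2r²Δ^{1/2}))' − (r−3M)q/(r²Δ^{1/2}) ) ]
  = (3/2) M r^{−6} (6r² − 32Mr + 45M²)`,
this quantity is strictly positive, and indeed `6r² − 32Mr + 45M² > 0` for all real `r`. -/
theorem morawetz_positivity (M : ℝ) (hM : 0 < M) (r : ℝ) (hr : 2 * M < r) :
    (r ^ 2)⁻¹ * (2 * (r ^ 3)⁻¹ * (r - 3 * M) ^ 2
          + (-3 * M * (r ^ 4)⁻¹ * (3 * r ^ 2 - 20 * M * r + 30 * M ^ 2)))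
      - deriv (fun x => (Real.sqrt (x ^ 2 - 2 * M * x) / 2) *
          (deriv (fun y => (2 * (y - 2 * M) * (y - 3 * M) / y ^ 2) * (y - 3 * M)
              / (2 * y ^ 2 * Real.sqrt (y ^ 2 - 2 * M * y))) x
            - (x - 3 * M) * (3 * M * (x ^ 2 - 2 * M * x) / x ^ 4)
              / (x ^ 2 * Real.sqrt (x ^ 2 - 2 * M * x)))) r
      = (3 / 2) * M * (r ^ 6)⁻¹ * (6 * r ^ 2 - 32 * M * r + 45 * M ^ 2) ∧
    0 < (3 / 2) * M * (r ^ 6)⁻¹ * (6 * r ^ 2 - 32 * M * r + 45 * M ^ 2) ∧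
    ∀ x : ℝ, 0 < 6 * x ^ 2 - 32 * M * x + 45 * M ^ 2 := by
  have hr0 : r ≠ 0 := by linarith
  refine ⟨?_, by have := Morawetz.quadratic_pos hM.ne' r; positivity, Morawetz.quadratic_pos hM.ne'⟩
  rw [Morawetz.deriv_outer hM.le hr]
  field_simp
  ring
end

section
/- Let f : [0,1] → ℝ be smooth (C^∞), and define g : (0,1] → ℝ by g(r) = r^{−1/2} ∫_0^r s^{−1/2} f(s) ds, extended to r = 0 by g(0) = 2 f(0). Then g is smooth on [0,1], and for every k ≥ 0 the k-th derivative satisfies g^{(k)}(0) = (2/(2k+1)) f^{(k)}(0). -/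
open Set MeasureTheory Filter Real
open scoped ContDiff ENNReal NNReal Topology
set_option maxHeartbeats 1000000

lemma taylor2_bound {φ φ' φ'' : ℝ → ℝ} {M : ℝ}
    (h1 : ∀ z ∈ Set.Icc (0:ℝ) 1, HasDerivWithinAt φ (φ' z) (Set.Icc 0 1) z)
    (h2 : ∀ z ∈ Set.Icc (0:ℝ) 1, HasDerivWithinAt φ' (φ'' z) (Set.Icc 0 1) z)
    (hM : ∀ z ∈ Set.Icc (0:ℝ) 1, |φ'' z| ≤ M)
    {x y : ℝ} (hx : x ∈ Set.Icc (0:ℝ) 1) (hy : y ∈ Set.Icc (0:ℝ) 1) :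
    |φ y - φ x - φ' x * (y - x)| ≤ M * (y - x) ^ 2 := by
  have hsub : Set.uIcc x y ⊆ Set.Icc (0:ℝ) 1 := Set.uIcc_subset_Icc hx hy
  have hd : ∀ z ∈ Set.uIcc x y, |φ' z - φ' x| ≤ M * |z - x| := by
    intro z hz
    have := Convex.norm_image_sub_le_of_norm_hasDerivWithin_le h2
      (fun w hw => by rw [Real.norm_eq_abs]; exact hM w hw) (convex_Icc 0 1) hx (hsub hz)
    simpa [Real.norm_eq_abs] using this
  have hM0 : 0 ≤ M := le_trans (abs_nonneg _) (hM x hx)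
  have key := Convex.norm_image_sub_le_of_norm_hasDerivWithin_le
    (f := fun z => φ z - φ x - φ' x * (z - x)) (f' := fun z => φ' z - φ' x)
    (s := Set.uIcc x y) (C := M * |y - x|)
    (fun z hz => by
      have h3 := (((h1 z (hsub hz)).mono hsub).sub_const (φ x)).sub
        (((hasDerivWithinAt_id z (Set.uIcc x y)).sub_const x).const_mul (φ' x))
      convert h3 using 1
      · funext w; simp only [Pi.sub_apply, id]
      · ring)
    (fun z hz => by
      rw [Real.norm_eq_abs]
      exact (hd z hz).trans (mul_le_mul_of_nonneg_left (Set.abs_sub_left_of_mem_uIcc hz) hM0))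
    (convex_uIcc x y) Set.left_mem_uIcc Set.right_mem_uIcc
  simp only [sub_self, mul_zero, sub_zero, Real.norm_eq_abs] at key
  calc _ ≤ M * |y - x| * |y - x| := key
    _ = M * (y - x) ^ 2 := by rw [mul_assoc, ← sq, sq_abs]

noncomputable def halfF (f : ℝ → ℝ) (k : ℕ) : ℝ → ℝ := iteratedDerivWithin k f (Set.Icc 0 1)

noncomputable def halfG (f : ℝ → ℝ) (k : ℕ) (r : ℝ) : ℝ :=
  2 * ∫ t in (0:ℝ)..1, t ^ (2 * k) * halfF f k (r * t ^ 2)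

/-- Smooth extension lemma for the time integral at the horizon: if `f : [0,1] → ℝ` is
smooth and `g(r) = r^{−1/2} ∫_0^r s^{−1/2} f(s) ds` for `r ∈ (0,1]`, extended by
`g(0) = 2 f(0)`, then `g` is smooth on `[0,1]` and its derivatives at `0` satisfy
`g^{(k)}(0) = (2/(2k+1)) f^{(k)}(0)` for every `k`. -/
theorem smooth_extension_of_half_power_integral (f g : ℝ → ℝ)
    (hf : ContDiffOn ℝ (⊤ : ℕ∞) f (Set.Icc 0 1))
    (hg0 : g 0 = 2 * f 0)
    (hg : ∀ r ∈ Set.Ioc (0 : ℝ) 1,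
      g r = (Real.sqrt r)⁻¹ * ∫ s in (0 : ℝ)..r, (Real.sqrt s)⁻¹ * f s) :
    ContDiffOn ℝ (⊤ : ℕ∞) g (Set.Icc 0 1) ∧
    ∀ k : ℕ, iteratedDerivWithin k g (Set.Icc 0 1) 0
      = (2 / (2 * (k : ℝ) + 1)) * iteratedDerivWithin k f (Set.Icc 0 1) 0 := by
  have huniq : UniqueDiffOn ℝ (Set.Icc (0:ℝ) 1) := uniqueDiffOn_Icc one_pos
  have h0mem : (0:ℝ) ∈ Set.Icc (0:ℝ) 1 := ⟨le_refl 0, zero_le_one⟩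
  have hFc : ∀ k, ContinuousOn (halfF f k) (Set.Icc 0 1) := fun k =>
    hf.continuousOn_iteratedDerivWithin (by exact_mod_cast (le_top : (k : ℕ∞) ≤ ⊤)) huniq
  have hFd : ∀ k, ∀ x ∈ Set.Icc (0:ℝ) 1,
      HasDerivWithinAt (halfF f k) (halfF f (k+1) x) (Set.Icc 0 1) x := by
    intro k x hx
    have hdiff := (hf.differentiableOn_iteratedDerivWithin (m := k)
      (by exact_mod_cast ENat.coe_lt_top k) huniq) x hx
    have := hdiff.hasDerivWithinAt
    unfold halfF
    rw [iteratedDerivWithin_succ]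
    exact this
  have hMb : ∀ k, ∃ M, ∀ z ∈ Set.Icc (0:ℝ) 1, |halfF f k z| ≤ M := by
    intro k
    obtain ⟨M, hM⟩ := isCompact_Icc.exists_bound_of_continuousOn (hFc k)
    exact ⟨M, fun z hz => by rw [← Real.norm_eq_abs]; exact hM z hz⟩
  have hmap : ∀ r ∈ Set.Icc (0:ℝ) 1, ∀ t ∈ Set.Icc (0:ℝ) 1, r * t ^ 2 ∈ Set.Icc (0:ℝ) 1 :=
    fun r hr t ht => ⟨mul_nonneg hr.1 (sq_nonneg t),
      mul_le_one₀ hr.2 (sq_nonneg t) (pow_le_one₀ ht.1 ht.2)⟩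
  have hII : ∀ (φ : ℝ → ℝ), ContinuousOn φ (Set.Icc 0 1) → ∀ m : ℕ, ∀ r ∈ Set.Icc (0:ℝ) 1,
      IntervalIntegrable (fun t => t ^ m * φ (r * t ^ 2)) volume 0 1 := by
    intro φ hφ m r hr
    apply ContinuousOn.intervalIntegrable
    rw [Set.uIcc_of_le zero_le_one]
    exact (continuousOn_pow m).mul (hφ.comp (continuousOn_const.mul (continuousOn_pow 2))
      (fun t ht => hmap r hr t ht))
  have hGd : ∀ k, ∀ r ∈ Set.Icc (0:ℝ) 1,
      HasDerivWithinAt (halfG f k) (halfG f (k+1) r) (Set.Icc 0 1) r := by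
    intro k r hr
    obtain ⟨M, hM⟩ := hMb (k+2)
    have hM0 : 0 ≤ M := le_trans (abs_nonneg _) (hM 0 h0mem)
    have hest : ∀ r' ∈ Set.Icc (0:ℝ) 1,
        |halfG f k r' - halfG f k r - (r' - r) * halfG f (k+1) r| ≤ 2 * M * (r' - r) ^ 2 := by
      intro r' hr'
      have e1 := hII (halfF f k) (hFc k) (2*k) r' hr'
      have e2 := hII (halfF f k) (hFc k) (2*k) r hr
      have e3 := (hII (halfF f (k+1)) (hFc (k+1)) (2*(k+1)) r hr).const_mul (r' - r)
      have hrw : halfG f k r' - halfG f k r - (r' - r) * halfG f (k+1) r = 2 * ∫ t in (0:ℝ)..1,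
          t ^ (2*k) * (halfF f k (r' * t ^ 2) - halfF f k (r * t ^ 2)
            - halfF f (k+1) (r * t ^ 2) * (r' * t ^ 2 - r * t ^ 2)) := by
        have hfun : (fun t : ℝ => t ^ (2*k) * (halfF f k (r' * t ^ 2) - halfF f k (r * t ^ 2)
            - halfF f (k+1) (r * t ^ 2) * (r' * t ^ 2 - r * t ^ 2))) = fun t =>
            (t ^ (2*k) * halfF f k (r' * t ^ 2) - t ^ (2*k) * halfF f k (r * t ^ 2))
              - (r' - r) * (t ^ (2*(k+1)) * halfF f (k+1) (r * t ^ 2)) := by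
          funext t; ring
        rw [hfun, intervalIntegral.integral_sub (e1.sub e2) e3, intervalIntegral.integral_sub e1 e2,
          intervalIntegral.integral_const_mul]
        unfold halfG
        ring
      rw [hrw, abs_mul, abs_two]
      have hb : ∀ t ∈ Set.uIoc (0:ℝ) 1, ‖t ^ (2*k) * (halfF f k (r' * t ^ 2) - halfF f k (r * t ^ 2)
          - halfF f (k+1) (r * t ^ 2) * (r' * t ^ 2 - r * t ^ 2))‖ ≤ M * (r' - r) ^ 2 := by
        intro t ht
        rw [Set.uIoc_of_le zero_le_one] at ht
        have htI : t ∈ Set.Icc (0:ℝ) 1 := ⟨ht.1.le, ht.2⟩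
        have hT := taylor2_bound (hFd k) (hFd (k+1)) hM (hmap r hr t htI) (hmap r' hr' t htI)
        rw [Real.norm_eq_abs, abs_mul]
        have ht1 : |t ^ (2*k)| ≤ 1 := by
          rw [abs_of_nonneg (pow_nonneg ht.1.le _)]; exact pow_le_one₀ ht.1.le ht.2
        have ht2 : t ^ 2 ≤ 1 := pow_le_one₀ ht.1.le ht.2
        have ht4 : M * (r' * t ^ 2 - r * t ^ 2) ^ 2 ≤ M * (r' - r) ^ 2 := by
          rw [show (r' * t ^ 2 - r * t ^ 2) ^ 2 = (r' - r) ^ 2 * (t ^ 2) ^ 2 by ring]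
          exact mul_le_mul_of_nonneg_left
            (mul_le_of_le_one_right (sq_nonneg _) (pow_le_one₀ (sq_nonneg t) ht2)) hM0
        calc _ ≤ 1 * (M * (r' - r) ^ 2) :=
              mul_le_mul ht1 (hT.trans ht4) (abs_nonneg _) zero_le_one
          _ = M * (r' - r) ^ 2 := one_mul _
      have := intervalIntegral.norm_integral_le_of_norm_le_const hb
      rw [Real.norm_eq_abs, sub_zero, abs_one, mul_one] at this
      linarith
    rw [hasDerivWithinAt_iff_isLittleO]
    have hO : (fun r' => halfG f k r' - halfG f k r - (r' - r) • halfG f (k+1) r)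
        =O[𝓝[Set.Icc (0:ℝ) 1] r] (fun r' => ‖r' - r‖ ^ 2) := by
      apply Asymptotics.IsBigO.of_bound (2 * M)
      filter_upwards [self_mem_nhdsWithin] with r' hr'
      simp only [smul_eq_mul, Real.norm_eq_abs, abs_pow, abs_abs, sq_abs]
      exact hest r' hr'
    exact hO.trans_isLittleO ((Asymptotics.isLittleO_pow_sub_sub r one_lt_two).mono
      nhdsWithin_le_nhds)
  have hGdiff : ∀ k, DifferentiableOn ℝ (halfG f k) (Set.Icc 0 1) :=
    fun k x hx => (hGd k x hx).differentiableWithinAt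
  have hGder : ∀ k, Set.EqOn (derivWithin (halfG f k) (Set.Icc 0 1)) (halfG f (k+1))
      (Set.Icc 0 1) :=
    fun k x hx => (hGd k x hx).derivWithin (huniq x hx)
  have hGs : ∀ n : ℕ, ∀ k, ContDiffOn ℝ n (halfG f k) (Set.Icc 0 1) := by
    intro n
    induction n with
    | zero => intro k; exact contDiffOn_zero.2 (hGdiff k).continuousOn
    | succ n ih =>
      intro k
      rw [Nat.cast_succ, contDiffOn_succ_iff_derivWithin huniq]
      refine ⟨hGdiff k, fun h => by simp at h, ?_⟩
      exact (ih (k+1)).congr (hGder k)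
  have hgG : Set.EqOn g (halfG f 0) (Set.Icc 0 1) := by
    intro r hr
    have hGr : halfG f 0 r = 2 * ∫ t in Set.Ioc (0:ℝ) 1, f (r * t ^ 2) := by
      simp only [halfG, halfF, mul_zero, pow_zero, one_mul, iteratedDerivWithin_zero]
      rw [intervalIntegral.integral_of_le zero_le_one]
    rw [hGr]
    rcases eq_or_lt_of_le hr.1 with h0 | hpos
    · rw [← h0, hg0]
      simp
    · rw [hg r ⟨hpos, hr.2⟩]
      have hd : ∀ t, HasDerivAt (fun t => r * t ^ 2) (r * (2 * t)) t := fun t => by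
        simpa using (hasDerivAt_pow 2 t).const_mul r
      have hinj : Set.InjOn (fun t : ℝ => r * t ^ 2) (Set.Ioc 0 1) := by
        intro a ha b hb hab
        have h2 : a ^ 2 = b ^ 2 := mul_left_cancel₀ hpos.ne' hab
        exact (pow_left_inj₀ ha.1.le hb.1.le two_ne_zero).1 h2
      have himage : (fun t : ℝ => r * t ^ 2) '' Set.Ioc 0 1 = Set.Ioc 0 r := by
        ext s
        constructor
        · rintro ⟨t, ht, rfl⟩
          exact ⟨by have := ht.1; positivity,
            mul_le_of_le_one_right hpos.le (pow_le_one₀ ht.1.le ht.2)⟩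
        · intro hs
          refine ⟨Real.sqrt (s / r), ⟨Real.sqrt_pos.2 (div_pos hs.1 hpos),
            Real.sqrt_le_one.2 ((div_le_one hpos).2 hs.2)⟩, ?_⟩
          show r * Real.sqrt (s / r) ^ 2 = s
          rw [Real.sq_sqrt (div_nonneg hs.1.le hpos.le)]
          field_simp
      rw [intervalIntegral.integral_of_le hpos.le, ← himage,
        integral_image_eq_integral_abs_deriv_smul measurableSet_Ioc
          (fun t _ => (hd t).hasDerivWithinAt) hinj]
      have hsr : Real.sqrt r ≠ 0 := (Real.sqrt_pos.2 hpos).ne'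
      have hint : ∀ t ∈ Set.Ioc (0:ℝ) 1, |r * (2 * t)| • ((Real.sqrt (r * t ^ 2))⁻¹ * f (r * t ^ 2))
          = (2 * Real.sqrt r) * f (r * t ^ 2) := by
        intro t ht
        have ht0 : 0 < t := ht.1
        rw [smul_eq_mul, abs_of_pos (by positivity), Real.sqrt_mul hpos.le, Real.sqrt_sq ht0.le,
          show r * (2 * t) = (Real.sqrt r * Real.sqrt r) * (2 * t) by
            rw [Real.mul_self_sqrt hpos.le]]
        field_simp
      rw [setIntegral_congr_fun measurableSet_Ioc hint, integral_const_mul]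
      field_simp
  have hiter : ∀ k, ∀ r ∈ Set.Icc (0:ℝ) 1,
      iteratedDerivWithin k (halfG f 0) (Set.Icc 0 1) r = halfG f k r := by
    intro k
    induction k with
    | zero => intro r hr; simp
    | succ k ih =>
      intro r hr
      rw [iteratedDerivWithin_succ, derivWithin_congr ih (ih r hr)]
      exact (hGd k r hr).derivWithin (huniq r hr)
  refine ⟨?_, ?_⟩
  · have : ContDiffOn ℝ ∞ (halfG f 0) (Set.Icc 0 1) := contDiffOn_infty.2 (fun n => hGs n 0)
    exact this.congr hgG
  · intro k
    rw [iteratedDerivWithin_congr hgG h0mem, hiter k 0 h0mem]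
    simp only [halfG, halfF, zero_mul]
    rw [intervalIntegral.integral_mul_const, integral_pow]
    have h2k : (2 * (k:ℝ) + 1) ≠ 0 := by positivity
    push_cast
    field_simp
    ring
end
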